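/- For every nonnegative integer m, the quantity α_m = 2·(2m−1)!!/(2m+2)!! satisfies α_m ≤ 1/((m+1)·√(π m)) for all m ≥ 1. -/

import Mathlib

/-!
Since `(2m+2)‼ = 2^(m+1) (m+1)!` and `2^m (2m-1)‼ = C(2m,m) m!`, we have
`α_m = C(2m,m) / (4^m (m+1))`, so the claim is `C(2m,m) √(π m) ≤ 4^m`.
Wallis' partial products satisfy `W m (2m+1) = 16^m / C(2m,m)^2` and, by the
lower bound `(2m+1)/(2m+2) · π/2 ≤ W m` coming from the sine integrals,
`π m ≤ π (2m+1)^2 / (4m+4) ≤ 16^m / C(2m,m)^2`.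
-/

open Nat

noncomputable def alphaFD (m : ℕ) : ℝ :=
  2 * (Nat.doubleFactorial (2 * m - 1) : ℝ) / (Nat.doubleFactorial (2 * m + 2) : ℝ)

open Real

namespace Nat

theorem centralBinom_mul_factorial_mul_factorial (n : ℕ) :
    centralBinom n * n ! * n ! = (2 * n)! := by
  simpa [centralBinom_eq_two_mul_choose, two_mul] using
    choose_mul_factorial_mul_factorial (n := 2 * n) (k := n) (by omega)

theorem two_pow_mul_factorial_mul_doubleFactorial (n : ℕ) :
    2 ^ n * n ! * (2 * n - 1)‼ = (2 * n)! := by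
  cases n with
  | zero => rfl
  | succ n =>
    rw [← doubleFactorial_two_mul, show 2 * (n + 1) - 1 = 2 * n + 1 by omega,
      show 2 * (n + 1) = 2 * n + 1 + 1 by ring, factorial_eq_mul_doubleFactorial]

theorem two_pow_mul_doubleFactorial_two_mul_sub_one (n : ℕ) :
    2 ^ n * (2 * n - 1)‼ = centralBinom n * n ! := by
  have h := (two_pow_mul_factorial_mul_doubleFactorial n).trans
    (centralBinom_mul_factorial_mul_factorial n).symm
  rw [mul_right_comm] at h
  exact mul_right_cancel₀ (factorial_ne_zero n) h

end Nat

theorem Real.Wallis.W_mul_two_mul_add_one (n : ℕ) :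
    Wallis.W n * (2 * n + 1) = 16 ^ n / (centralBinom n : ℝ) ^ 2 := by
  have h : ((2 * n)! : ℝ) = centralBinom n * n ! * n ! := by
    exact_mod_cast (centralBinom_mul_factorial_mul_factorial n).symm
  rw [Wallis.W_eq_factorial_ratio, h, pow_mul]
  have : (n ! : ℝ) ≠ 0 := by positivity
  field_simp
  norm_num

theorem pi_mul_centralBinom_sq_le (n : ℕ) : π * n * (centralBinom n : ℝ) ^ 2 ≤ 16 ^ n := by
  have hC : (0 : ℝ) < centralBinom n := by exact_mod_cast centralBinom_pos n
  have hW : π * (2 * n + 1) ^ 2 / (4 * n + 4) ≤ 16 ^ n / (centralBinom n : ℝ) ^ 2 := by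
    rw [← Wallis.W_mul_two_mul_add_one]
    calc π * (2 * n + 1) ^ 2 / (4 * n + 4)
        = (2 * n + 1) / (2 * n + 2) * (π / 2) * (2 * n + 1) := by field_simp; ring
      _ ≤ Wallis.W n * (2 * n + 1) := by gcongr; exact Wallis.le_W n
  have hn : π * n ≤ π * (2 * n + 1) ^ 2 / (4 * n + 4) := by
    rw [le_div_iff₀ (by positivity)]
    nlinarith [pi_pos]
  rw [← le_div_iff₀ (by positivity)]
  exact hn.trans hW

theorem centralBinom_mul_sqrt_pi_mul_le (n : ℕ) : centralBinom n * √(π * n) ≤ (4 : ℝ) ^ n := by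
  have h := Real.sqrt_le_sqrt (pi_mul_centralBinom_sq_le n)
  rwa [show (16 : ℝ) ^ n = ((4 : ℝ) ^ n) ^ 2 by rw [← pow_mul, mul_comm, pow_mul]; norm_num,
    Real.sqrt_sq (by positivity), mul_comm, Real.sqrt_mul (by positivity),
    Real.sqrt_sq (by positivity)] at h

theorem alphaFD_eq (m : ℕ) : alphaFD m = centralBinom m / (4 ^ m * (m + 1)) := by
  have h : (2 ^ m * (2 * m - 1)‼ : ℝ) = centralBinom m * m ! := by
    exact_mod_cast two_pow_mul_doubleFactorial_two_mul_sub_one m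
  rw [alphaFD, show 2 * m + 2 = 2 * (m + 1) by ring, doubleFactorial_two_mul, factorial_succ]
  push_cast
  have : (m ! : ℝ) ≠ 0 := by positivity
  rw [div_eq_div_iff (by positivity) (by positivity), show (4 : ℝ) ^ m = 2 ^ m * 2 ^ m by
    rw [← mul_pow]; norm_num]
  linear_combination (2 * 2 ^ m * (m + 1) : ℝ) * h

theorem alpha_bound (m : ℕ) (hm : 1 ≤ m) :
    alphaFD m ≤ 1 / ((m + 1) * Real.sqrt (Real.pi * m)) := by
  have hm' : (0 : ℝ) < m := by exact_mod_cast hm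
  have hs : 0 < √(π * m) := Real.sqrt_pos.mpr (by positivity)
  rw [alphaFD_eq, div_le_div_iff₀ (by positivity) (by positivity)]
  nlinarith [centralBinom_mul_sqrt_pi_mul_le m]
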